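/- Let T be an irreducible weighted shift (T e_n = α_n e_{n+1} with all α_n > 0) that is a norm limit of complex symmetric operators. Then there exists a subsequence of the weights (α_n) converging to 0. -/

import Mathlib

open Filter Topology ContinuousLinearMap

noncomputable section

def IsConjugation {H : Type*} [NormedAddCommGroup H] [InnerProductSpace ℂ H]
    (C : H → H) : Prop :=
  (∀ x y, C (x + y) = C x + C y) ∧
  (∀ (a : ℂ) (x : H), C (a • x) = (starRingEnd ℂ a) • C x) ∧
  (∀ x, ‖C x‖ = ‖x‖) ∧
  (∀ x, C (C x) = x)

def IsCSO {H : Type*} [NormedAddCommGroup H] [InnerProductSpace ℂ H]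
    [CompleteSpace H] (T : H →L[ℂ] H) : Prop :=
  ∃ C : H → H, IsConjugation C ∧ ∀ x, T x = C (adjoint T (C x))

abbrev L2 : Type := lp (fun _ : ℕ => ℂ) 2

def e (n : ℕ) : L2 := lp.single 2 n 1

/-!
If all weights were bounded below by some `δ > 0`, then `‖T x‖ ≥ δ ‖x‖` for every `x`, while
`T† e₀ = 0`. For a complex symmetric `S = C S† C` the vector `y = C e₀` is a unit vector with
`‖S y‖ = ‖S† e₀‖ = ‖(S - T)† e₀‖ ≤ ‖S - T‖`, so `δ ≤ ‖T y‖ ≤ 2 ‖S - T‖`: `T` stays at distance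
`δ / 2` from the complex symmetric operators. Hence the positive weights have infimum `0`, i.e.
`0` is a cluster value of `(α n)`, and a subsequence tends to `0`.
-/

theorem exists_pos_forall_le_of_eventually_le {ι : Type*} {u : ι → ℝ} (hu : ∀ i, 0 < u i)
    {ε : ℝ} (hε : 0 < ε) (h : ∀ᶠ i in cofinite, ε ≤ u i) : ∃ δ > 0, ∀ i, δ ≤ u i := by
  have hδ : ∀ᶠ δ in 𝓝[>] (0 : ℝ), 0 < δ ∧ δ ≤ ε ∧ ∀ i ∈ {i | ¬ ε ≤ u i}, δ ≤ u i :=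
    Filter.Eventually.and self_mem_nhdsWithin <| nhdsWithin_le_nhds <|
      (eventually_le_nhds hε).and <| (eventually_all_finite h).2 fun i _ => eventually_le_nhds (hu i)
  obtain ⟨δ, hδ₀, hδε, hδu⟩ := hδ.exists
  exact ⟨δ, hδ₀, fun i => if hi : ε ≤ u i then hδε.trans hi else hδu i hi⟩

theorem exists_strictMono_tendsto_zero_of_forall_pos {u : ℕ → ℝ} (hu : ∀ n, 0 < u n)
    (h : ¬ ∃ δ > 0, ∀ n, δ ≤ u n) :
    ∃ φ : ℕ → ℕ, StrictMono φ ∧ Tendsto (u ∘ φ) atTop (𝓝 0) := by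
  refine MapClusterPt.tendsto_subseq <| Metric.nhds_basis_ball.mapClusterPt_iff_frequently.2
    fun ε hε => ?_
  by_contra hfreq
  refine h (exists_pos_forall_le_of_eventually_le hu hε ?_)
  rw [Nat.cofinite_eq_atTop]
  filter_upwards [not_frequently.1 hfreq] with n hn
  simpa [Real.dist_eq, abs_of_pos (hu n)] using hn

section ComplexSymmetric

variable {H : Type*} [NormedAddCommGroup H] [InnerProductSpace ℂ H] [CompleteSpace H]

theorem IsCSO.exists_norm_apply_eq_norm_adjoint_apply {S : H →L[ℂ] H} (hS : IsCSO S) (x : H) :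
    ∃ y, ‖y‖ = ‖x‖ ∧ ‖S y‖ = ‖adjoint S x‖ := by
  obtain ⟨C, ⟨-, -, hC_norm, hC_invol⟩, hSC⟩ := hS
  exact ⟨C x, hC_norm x, by rw [hSC, hC_invol, hC_norm]⟩

theorem le_two_mul_norm_sub_of_isCSO {T S : H →L[ℂ] H} {δ : ℝ} (hT : ∀ x, δ * ‖x‖ ≤ ‖T x‖)
    {u : H} (hu : ‖u‖ = 1) (hTu : adjoint T u = 0) (hS : IsCSO S) : δ ≤ 2 * ‖S - T‖ := by
  obtain ⟨y, hy, hSy⟩ := hS.exists_norm_apply_eq_norm_adjoint_apply u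
  have hadj : adjoint S u = adjoint (S - T) u := by simp [hTu]
  calc δ = δ * ‖y‖ := by rw [hy, hu, mul_one]
    _ ≤ ‖T y‖ := hT y
    _ ≤ ‖(T - S) y‖ + ‖S y‖ := by simpa using norm_le_norm_sub_add (T y) (S y)
    _ ≤ ‖T - S‖ * ‖y‖ + ‖adjoint (S - T)‖ * ‖u‖ := by
        rw [hSy, hadj]; gcongr <;> exact le_opNorm _ _
    _ = 2 * ‖S - T‖ := by rw [hy, hu, LinearIsometryEquiv.norm_map, norm_sub_rev]; ring

theorem notMem_closure_setOf_isCSO {T : H →L[ℂ] H} {δ : ℝ} (hδ : 0 < δ)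
    (hT : ∀ x, δ * ‖x‖ ≤ ‖T x‖) {u : H} (hu : ‖u‖ = 1) (hTu : adjoint T u = 0) :
    T ∉ closure {S | IsCSO S} := by
  intro hmem
  obtain ⟨S, hS, hdist⟩ := Metric.mem_closure_iff.1 hmem (δ / 2) (half_pos hδ)
  rw [dist_eq_norm, norm_sub_rev] at hdist
  linarith [le_two_mul_norm_sub_of_isCSO hT hu hTu hS]

end ComplexSymmetric

theorem lp.hasSum_norm_sq {ι 𝕜 : Type*} [RCLike 𝕜] {G : ι → Type*}
    [∀ i, NormedAddCommGroup (G i)] [∀ i, InnerProductSpace 𝕜 (G i)] (x : lp G 2) :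
    HasSum (fun i => ‖x i‖ ^ 2) (‖x‖ ^ 2) := by
  simpa only [RCLike.reCLM_apply, inner_self_eq_norm_sq] using
    (RCLike.reCLM (K := 𝕜)).hasSum (lp.hasSum_inner x x)

theorem e_apply (n k : ℕ) : e n k = if k = n then 1 else 0 := by
  simp [e, lp.single_apply, Pi.single_apply]

theorem single_eq_smul_e (n : ℕ) (a : ℂ) : lp.single 2 n a = a • e n := by
  rw [e, ← lp.single_smul, smul_eq_mul, mul_one]

theorem norm_e (n : ℕ) : ‖e n‖ = 1 := by
  simp [e, lp.norm_single (E := fun _ : ℕ => ℂ) (p := 2) (by norm_num) n 1]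

def IsWeightedShift (α : ℕ → ℝ) (T : L2 →L[ℂ] L2) : Prop :=
  ∀ n, T (e n) = (α n : ℂ) • e (n + 1)

namespace IsWeightedShift

variable {α : ℕ → ℝ} {T : L2 →L[ℂ] L2}

theorem hasSum_apply (hT : IsWeightedShift α T) (x : L2) (k : ℕ) :
    HasSum (fun n => x n * α n * e (n + 1) k) (T x k) := by
  have := ((lp.evalCLM ℂ (fun _ : ℕ => ℂ) 2 k).comp T).hasSum
    (lp.hasSum_single ENNReal.ofNat_ne_top x)
  simpa [single_eq_smul_e, hT _, lp.evalCLM, mul_assoc] using this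

theorem apply_zero (hT : IsWeightedShift α T) (x : L2) : T x 0 = 0 :=
  (hT.hasSum_apply x 0).unique <| by simp [e_apply]

theorem apply_succ (hT : IsWeightedShift α T) (x : L2) (k : ℕ) : T x (k + 1) = α k * x k := by
  refine (hT.hasSum_apply x (k + 1)).unique ?_
  convert hasSum_single (f := fun n => x n * α n * e (n + 1) (k + 1)) k fun n hn => ?_ using 1
  · simp [e_apply, mul_comm]
  · simp [e_apply, Ne.symm hn]

theorem hasSum_norm_sq_apply (hT : IsWeightedShift α T) (x : L2) :
    HasSum (fun k => α k ^ 2 * ‖x k‖ ^ 2) (‖T x‖ ^ 2) := by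
  have h := (hasSum_nat_add_iff' 1).2 (lp.hasSum_norm_sq (𝕜 := ℂ) (T x))
  simpa [hT.apply_succ, hT.apply_zero, mul_pow] using h

theorem mul_norm_le_norm_apply (hT : IsWeightedShift α T) {δ : ℝ} (hδ : 0 ≤ δ)
    (hα : ∀ n, δ ≤ α n) (x : L2) : δ * ‖x‖ ≤ ‖T x‖ := by
  refine le_of_pow_le_pow_left₀ two_ne_zero (norm_nonneg _) ?_
  rw [mul_pow]
  refine hasSum_le (fun k => ?_) ((lp.hasSum_norm_sq (𝕜 := ℂ) x).mul_left (δ ^ 2))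
    (hT.hasSum_norm_sq_apply x)
  gcongr
  exact hα k

theorem adjoint_e_zero (hT : IsWeightedShift α T) : adjoint T (e 0) = 0 :=
  ext_inner_right ℂ fun y => by
    rw [adjoint_inner_left, inner_zero_left, e, lp.inner_single_left, hT.apply_zero,
      inner_zero_right]

end IsWeightedShift

/-- If an irreducible weighted shift is a norm limit of complex symmetric
operators, then some subsequence of its weights converges to `0`. -/
theorem weights_subseq_to_zero (α : ℕ → ℝ) (hα : ∀ n, 0 < α n)
    (T : L2 →L[ℂ] L2) (hT : ∀ n, T (e n) = (α n : ℂ) • e (n + 1))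
    (hlim : ∃ Tseq : ℕ → (L2 →L[ℂ] L2), (∀ n, IsCSO (Tseq n)) ∧
      Tendsto Tseq atTop (𝓝 T)) :
    ∃ φ : ℕ → ℕ, StrictMono φ ∧ Tendsto (fun k => α (φ k)) atTop (𝓝 0) := by
  obtain ⟨Tseq, hCSO, hTseq⟩ := hlim
  have hshift : IsWeightedShift α T := hT
  have hT_mem : T ∈ closure {S | IsCSO S} := mem_closure_of_tendsto hTseq (.of_forall hCSO)
  have hα_not_bdd : ¬ ∃ δ > 0, ∀ n, δ ≤ α n := fun ⟨δ, hδ, hδα⟩ =>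
    notMem_closure_setOf_isCSO hδ (hshift.mul_norm_le_norm_apply hδ.le hδα) (norm_e 0)
      hshift.adjoint_e_zero hT_mem
  exact exists_strictMono_tendsto_zero_of_forall_pos hα hα_not_bdd
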